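/- For any element x of a Hom-group (G, α), the centralizer C_G(x) = { g ∈ G : gx = xg } is a Hom-subgroup of G, provided α(x) = x or more generally C_G(x) is closed under α; in particular, if x satisfies α(x) = x then C_G(x) contains 1 and is closed under multiplication and inverses. -/

import Mathlib

/-- A Hom-group: a set `G` with a bijective twisting map `α` (given as an `Equiv`),
a binary operation `mul`, and a distinguished unit `one`, satisfying Hom-associativity,
multiplicativity of `α`, Hom-unitality, and existence of two-sided inverses. -/
structure HomGroup (G : Type*) where
  mul : G → G → G
  one : G
  α : G ≃ G
  hom_assoc : ∀ g h k, mul (α g) (mul h k) = mul (mul g h) (α k)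
  α_mul : ∀ g k, α (mul g k) = mul (α g) (α k)
  mul_one : ∀ g, mul g one = α g
  one_mul : ∀ g, mul one g = α g
  α_one : α one = one
  inv : G → G
  mul_inv : ∀ g, mul g (inv g) = one
  inv_mul : ∀ g, mul (inv g) g = one

/-!
Without any hypothesis on `x`, the centralizer `C(x)` contains the unit and is closed under
inverses, while products and `α`-images of elements of `C(x)` lie in `C(α x)`: Hom-associativity
moves `x` across a product at the cost of one application of `α`. For inverses, left
multiplication by `α g` (which is cancellable) turns both `g⁻¹ x` and `x g⁻¹` into `α (α x)`.
-/

namespace HomGroup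

variable {G : Type*} (H : HomGroup G)

def centralizer (x : G) : Set G := {g | H.mul g x = H.mul x g}

variable {H}

theorem mem_centralizer {x g : G} : g ∈ H.centralizer x ↔ H.mul g x = H.mul x g := Iff.rfl

theorem α_inv_mul_mul (a y : G) : H.mul (H.α (H.inv a)) (H.mul a y) = H.α (H.α y) := by
  rw [H.hom_assoc, H.inv_mul, H.one_mul]

theorem mul_left_cancel {a b c : G} (h : H.mul a b = H.mul a c) : b = c := by
  have h' := congrArg (H.mul (H.α (H.inv a))) h
  rw [α_inv_mul_mul, α_inv_mul_mul] at h'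
  exact H.α.injective (H.α.injective h')

variable (H) in
theorem one_mem_centralizer (x : G) : H.one ∈ H.centralizer x := by
  rw [mem_centralizer, H.one_mul, H.mul_one]

theorem mul_mem_centralizer {x g k : G} (hg : g ∈ H.centralizer x) (hk : k ∈ H.centralizer x) :
    H.mul g k ∈ H.centralizer (H.α x) :=
  calc H.mul (H.mul g k) (H.α x) = H.mul (H.α g) (H.mul k x) := (H.hom_assoc g k x).symm
    _ = H.mul (H.α g) (H.mul x k) := by rw [mem_centralizer.mp hk]
    _ = H.mul (H.mul g x) (H.α k) := H.hom_assoc g x k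
    _ = H.mul (H.mul x g) (H.α k) := by rw [mem_centralizer.mp hg]
    _ = H.mul (H.α x) (H.mul g k) := (H.hom_assoc x g k).symm

theorem inv_mem_centralizer {x g : G} (hg : g ∈ H.centralizer x) : H.inv g ∈ H.centralizer x := by
  apply mul_left_cancel (a := H.α g)
  calc H.mul (H.α g) (H.mul (H.inv g) x) = H.mul H.one (H.α x) := by rw [H.hom_assoc, H.mul_inv]
    _ = H.mul (H.α x) H.one := by rw [H.one_mul, H.mul_one]
    _ = H.mul (H.mul x g) (H.α (H.inv g)) := by rw [← H.mul_inv g, H.hom_assoc]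
    _ = H.mul (H.α g) (H.mul x (H.inv g)) := by rw [← mem_centralizer.mp hg, H.hom_assoc]

theorem α_mem_centralizer {x g : G} (hg : g ∈ H.centralizer x) :
    H.α g ∈ H.centralizer (H.α x) := by
  rw [mem_centralizer, ← H.α_mul, ← H.α_mul, mem_centralizer.mp hg]

end HomGroup

/-- The centralizer of an element `x` fixed by `α` is a Hom-subgroup: it contains
the unit, and is closed under multiplication, inversion, and the twisting map. -/
theorem homGroup_centralizer_subgroup {G : Type*} (H : HomGroup G) (x : G)
    (hx : H.α x = x) :
    let C : Set G := {g | H.mul g x = H.mul x g}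
    H.one ∈ C ∧
    (∀ g ∈ C, ∀ k ∈ C, H.mul g k ∈ C) ∧
    (∀ g ∈ C, H.inv g ∈ C) ∧
    (∀ g ∈ C, H.α g ∈ C) := by
  refine ⟨H.one_mem_centralizer x, fun g hg k hk => ?_, fun g hg => HomGroup.inv_mem_centralizer hg,
    fun g hg => ?_⟩
  · exact hx ▸ HomGroup.mul_mem_centralizer hg hk
  · exact hx ▸ HomGroup.α_mem_centralizer hg
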